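/- arXiv:1602.03259 — 2 statements merged into one kernel-verified Lean document; each statement's English description precedes it below -/
import Mathlib

section
/- For cyclic pursuit of n bugs in ℝ^d, at any time t at which not all bugs coincide, the total length l(t) = Σ_{i∈ℤ/n} ‖b_{i+1}(t) − b_i(t)‖ satisfies |dl/dt(t)| ≥ min[1, n(1 − cos(2π/n))]. Consequently, the pursuit ends by time l(0)·(min[1, n(1 − cos(2π/n))])^{-1}, a bound that grows linearly in n. -/
/-!
Where the gaps `b (i+1) - b i` are not all zero, every bug moves with the unit velocity `v i`
pointing along the first nonzero gap ahead of it, so `l' = -∑ (1 - cos θᵢ)` with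
`θᵢ = ∠(v i, v (i+1))`. The nonzero gaps are the edges of a closed polygon, whose edge
directions turn by at least `2π` in total (merge two adjacent edges and induct). Hence either
some `θᵢ ≥ π/2`, which alone contributes `1`, or all `θᵢ` lie in `[0, π/2]`, where `cos`
is concave, and Jensen's inequality at the mean angle `≥ 2π/n` gives `n (1 - cos (2π/n))`.
Decreasing at that rate, `l` vanishes, i.e. all bugs meet, by time
`l 0 / min 1 (n (1 - cos (2π/n)))`.
-/

open Set Filter
open scoped Topology Real

/-- **Cyclic pursuit of `n` bugs in `ℝ^d`** with positions `b i t` for `i ∈ ℤ/n`, `t ∈ [0,∞)`: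
the unique collection of (piecewise smooth, in particular continuous) curves with the given
initial values such that
(1) whenever `b i t ≠ b (i+1) t`, bug `i` moves with unit velocity straight towards bug `i+1`
    (the derivative is taken within `[t,∞)`, so that the law of motion makes sense at `t = 0`
    and at the finitely many junction times of the piecewise smooth motion);
(2) bugs that have met stay together;
(3) once all the bugs coincide, they halt. -/
structure IsEuclideanCyclicPursuit (n d : ℕ) (b : ZMod n → ℝ → EuclideanSpace ℝ (Fin d)) :
    Prop where
  cont : ∀ i, ContinuousOn (b i) (Ici 0)
  chase : ∀ (i : ZMod n) (t : ℝ), 0 ≤ t → b i t ≠ b (i + 1) t →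
    HasDerivWithinAt (b i) ((‖b (i + 1) t - b i t‖)⁻¹ • (b (i + 1) t - b i t)) (Ici t) t
  merge : ∀ (i : ZMod n) (t₀ : ℝ), 0 ≤ t₀ → b i t₀ = b (i + 1) t₀ →
    ∀ t, t₀ < t → b i t = b (i + 1) t
  halt : ∀ t₀ : ℝ, 0 ≤ t₀ → (∀ i, b i t₀ = b 0 t₀) → ∀ t, t₀ < t → ∀ i, b i t = b 0 t₀

open InnerProductGeometry
open scoped RealInnerProductSpace

namespace ZMod

variable {n : ℕ} [NeZero n]

theorem sum_eq_sum_range_add {M : Type*} [AddCommMonoid M] (f : ZMod n → M) (j : ZMod n) :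
    ∑ i, f i = ∑ m ∈ Finset.range n, f (j + m) := by
  rw [← Fintype.sum_equiv (Equiv.addLeft j) (fun i => f (j + i)) f fun _ => rfl]
  refine Finset.sum_nbij' val Nat.cast ?_ ?_ ?_ ?_ ?_ <;>
    simp +contextual [val_lt, Nat.mod_eq_of_lt]

@[elab_as_elim]
theorem decreasing_induction {P : ZMod n → Prop} (j : ZMod n) (hj : P j)
    (h : ∀ i, P (i + 1) → P i) (i : ZMod n) : P i := by
  have key : ∀ m : ℕ, P (j - m) := by
    intro m
    induction m with
    | zero => simpa using hj
    | succ m ih => exact h _ (by simpa [sub_add] using ih)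
  simpa using key (j - i).val

theorem apply_eq_apply_zero {α : Type*} {f : ZMod n → α} (h : ∀ i, f i = f (i + 1))
    (i : ZMod n) : f i = f 0 :=
  decreasing_induction 0 rfl (fun i hi => (h i).trans hi) i

end ZMod

section Turning

variable {V : Type*} [NormedAddCommGroup V] [InnerProductSpace ℝ V]

theorem InnerProductGeometry.angle_add_angle_add_eq {x : V} (y : V) (hx : x ≠ 0) :
    angle x (x + y) + angle (x + y) y = angle x y := by
  have h := angle_add_angle_sub_add_angle_sub_eq_pi (x + y) hx
  rw [add_sub_cancel_left, sub_add_cancel_left, angle_neg_right, angle_comm (x + y) x] at h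
  linarith

noncomputable def turning : List V → ℝ
  | x :: y :: l => angle x y + turning (y :: l)
  | _ => 0

@[simp]
theorem turning_singleton (x : V) : turning [x] = 0 := rfl

@[simp]
theorem turning_cons_cons (x y : V) (l : List V) :
    turning (x :: y :: l) = angle x y + turning (y :: l) := rfl

theorem turning_nonneg : ∀ l : List V, 0 ≤ turning l
  | [] | [_] => le_rfl
  | x :: y :: l => add_nonneg (angle_nonneg x y) (turning_nonneg (y :: l))

theorem turning_cons_le_turning_cons_cons (x y : V) : ∀ l : List V,
    turning (x :: l) ≤ turning (x :: y :: l)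
  | [] => turning_nonneg _
  | z :: l => by
    simpa [← add_assoc] using angle_le_angle_add_angle x y z

theorem List.Sublist.turning_cons_le {l₁ l₂ : List V} (h : l₁.Sublist l₂) (x : V) :
    turning (x :: l₁) ≤ turning (x :: l₂) := by
  induction h generalizing x with
  | slnil => rfl
  | cons y _ ih => exact (ih x).trans (turning_cons_le_turning_cons_cons x y _)
  | cons_cons y _ ih => simpa using ih y

theorem List.Sublist.turning_le {l₁ l₂ : List V} (h : l₁.Sublist l₂) :
    turning l₁ ≤ turning l₂ := by
  induction h with
  | slnil => rfl
  | @cons _ l₂ y _ ih =>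
    refine ih.trans ?_
    cases l₂ with
    | nil => exact turning_nonneg _
    | cons z l => exact le_add_of_nonneg_left (angle_nonneg y z)
  | cons_cons y h _ => exact h.turning_cons_le y

theorem turning_append_singleton_append_singleton (x y : V) : ∀ l : List V,
    turning (l ++ [x] ++ [y]) = turning (l ++ [x]) + angle x y
  | [] => by simp
  | [z] => by simp
  | z :: w :: l => by
    simp only [List.cons_append, turning_cons_cons] at *
    rw [← List.cons_append, ← List.cons_append,
      turning_append_singleton_append_singleton x y (w :: l)]
    simp only [List.cons_append]; ring

theorem turning_map_smul {ι : Type*} (f : ι → V) (c : ι → ℝ) : ∀ l : List ι,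
    (∀ i ∈ l, 0 < c i) → turning (l.map fun i => c i • f i) = turning (l.map f)
  | [] | [_] => fun _ => rfl
  | i :: j :: l => fun hc => by
    simp only [List.map_cons, turning_cons_cons] at *
    rw [angle_smul_left_of_pos _ _ (hc i (by simp)),
      angle_smul_right_of_pos _ _ (hc j (by simp))]
    have := turning_map_smul f c (j :: l) (fun k hk => hc k (List.mem_cons_of_mem i hk))
    simp only [List.map_cons] at this
    rw [this]

theorem two_pi_le_turning_of_sum_eq_zero : ∀ (x : V) (l : List V), (∀ v ∈ x :: l, v ≠ 0) →
    (x :: l).sum = 0 → 2 * π ≤ turning (x :: l ++ [x])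
  | x, [], hne, hsum => absurd (by simpa using hsum) (hne x (by simp))
  | x, y :: l, hne, hsum => by
    -- Replacing the edges `x, y` by `x + y` cannot increase the turning, because
    -- `∠(x, x + y) + ∠(x + y, y) = ∠(x, y)`; if `x + y = 0`, the path turns by `π` twice.
    have hx : x ≠ 0 := hne x (by simp)
    by_cases hxy : x + y = 0
    · obtain rfl : y = -x := by linear_combination (norm := abel) hxy
      have hback : turning [-x, x] ≤ turning (-x :: l ++ [x]) :=
        (List.nil_sublist l).append_right [x] |>.turning_cons_le (-x)
      simp only [List.cons_append, turning_cons_cons, turning_singleton, add_zero] at hback ⊢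
      rw [angle_self_neg_of_nonzero hx] at *
      rw [angle_neg_self_of_nonzero hx] at hback
      linarith
    · have hmerged := two_pi_le_turning_of_sum_eq_zero (x + y) l
        (by simpa [hxy] using fun v hv => hne v (by simp [hv]))
        (by simpa [add_assoc] using hsum)
      have hsub : (l ++ [x + y]).Sublist (y :: (l ++ [x]) ++ [x + y]) := by simp
      have hdetour : turning ((x + y) :: l ++ [x + y]) ≤
          turning ((x + y) :: y :: l ++ [x] ++ [x + y]) :=
        hsub.turning_cons_le (x + y)
      rw [turning_append_singleton_append_singleton] at hdetour
      simp only [List.cons_append, turning_cons_cons] at hmerged hdetour ⊢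
      linarith [angle_add_angle_add_eq y hx]

theorem turning_map_range (φ : ℕ → V) (k : ℕ) :
    turning ((List.range (k + 1)).map φ) =
      ∑ m ∈ Finset.range k, angle (φ m) (φ (m + 1)) := by
  induction k with
  | zero => simp
  | succ k ih =>
    rw [List.range_succ, List.map_append, List.map_singleton] at ih ⊢
    rw [List.range_succ, List.map_append, List.map_singleton,
      turning_append_singleton_append_singleton, ih, Finset.sum_range_succ]


theorem two_pi_le_sum_angle {n : ℕ} [NeZero n] (g v : ZMod n → V) (hsum : ∑ i, g i = 0)
    (hg : ∃ j, g j ≠ 0) (hv : ∀ i, g i ≠ 0 → v i = ‖g i‖⁻¹ • g i) :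
    2 * π ≤ ∑ i, angle (v i) (v (i + 1)) := by
  -- Start the cycle at a nonzero `g j` and drop the indices with `g i = 0`: this can only lower
  -- the turning, and leaves the turning of the closed polygon whose edges are the nonzero `g i`.
  classical
  obtain ⟨j, hj⟩ := hg
  obtain ⟨k, rfl⟩ : ∃ k, n = k + 1 := Nat.exists_eq_succ_of_ne_zero (NeZero.ne n)
  set φ : ℕ → V := fun m => v (j + m)
  set γ : ℕ → V := fun m => g (j + m)
  have hγ_last : γ (k + 1) = γ 0 := by simp [γ]
  set S := (List.range (k + 1)).filter (fun m => γ m ≠ 0) with hS_def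
  obtain ⟨S', hS⟩ : ∃ S', S = 0 :: S' :=
    ⟨_, by rw [hS_def, List.range_succ_eq_map,
      List.filter_cons_of_pos (by simpa [γ] using hj)]⟩
  have hγ : ∀ m ∈ S ++ [k + 1], γ m ≠ 0 := by
    intro m hm
    rcases List.mem_append.mp hm with hm | hm
    · simpa using (List.mem_filter.mp hm).2
    · rw [List.mem_singleton.mp hm, hγ_last]; simpa [γ] using hj
  have hS_sum : (S.map γ).sum = 0 := by
    -- `Finset.range` and `Finset.filter` are built on `List.range` and `List.filter`
    change ∑ m ∈ (Finset.range (k + 1)).filter (fun m => γ m ≠ 0), γ m = 0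
    rw [Finset.sum_filter_ne_zero, ← ZMod.sum_eq_sum_range_add g j, hsum]
  have hfenchel := two_pi_le_turning_of_sum_eq_zero (γ 0) (S'.map γ)
    (by simpa [← List.map_cons, ← hS] using fun m hm => hγ m (List.mem_append_left _ hm))
    (by rw [← List.map_cons, ← hS, hS_sum])
  have hturn : ∑ i, angle (v i) (v (i + 1)) = turning ((List.range (k + 2)).map φ) := by
    rw [turning_map_range, ZMod.sum_eq_sum_range_add _ j]
    refine Finset.sum_congr rfl fun m _ => ?_
    simp [φ, add_assoc]
  have hsub : (S ++ [k + 1]).Sublist (List.range (k + 2)) := by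
    rw [List.range_succ]
    exact List.filter_sublist.append (List.Sublist.refl _)
  calc 2 * π ≤ turning ((S ++ [k + 1]).map γ) := by
        simpa [hS, hγ_last] using hfenchel
    _ = turning ((S ++ [k + 1]).map fun m => ‖γ m‖⁻¹ • γ m) :=
        (turning_map_smul γ _ _ fun m hm => inv_pos.mpr (norm_pos_iff.mpr (hγ m hm))).symm
    _ = turning ((S ++ [k + 1]).map φ) :=
        congrArg turning (List.map_congr_left fun m hm => (hv _ (hγ m hm)).symm)
    _ ≤ _ := (hsub.map φ).turning_le
    _ = _ := hturn.symm

end Turning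

open Real in
theorem min_le_sum_one_sub_cos {ι : Type*} [Fintype ι] (θ : ι → ℝ)
    (hθ : ∀ i, θ i ∈ Icc 0 π) (hsum : 2 * π ≤ ∑ i, θ i) :
    min 1 (Fintype.card ι * (1 - cos (2 * π / Fintype.card ι))) ≤ ∑ i, (1 - cos (θ i)) := by
  have hterm : ∀ i, 0 ≤ 1 - cos (θ i) := fun i => sub_nonneg.mpr (cos_le_one _)
  by_cases hobtuse : ∃ i, π / 2 ≤ θ i
  · obtain ⟨i, hi⟩ := hobtuse
    have : 1 ≤ 1 - cos (θ i) := by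
      linarith [cos_nonpos_of_pi_div_two_le_of_le hi (by linarith [(hθ i).2])]
    exact (min_le_left _ _).trans
      (this.trans (Finset.single_le_sum (fun j _ => hterm j) (Finset.mem_univ i)))
  push Not at hobtuse
  set N : ℝ := (Fintype.card ι : ℝ)
  have hN : 0 < N := by
    rcases isEmpty_or_nonempty ι with hι | hι
    · simp at hsum; linarith [pi_pos]
    · exact Nat.cast_pos.mpr Fintype.card_pos
  set θbar := ∑ i, N⁻¹ • θ i with hθbar
  have hjensen : ∑ i, N⁻¹ • cos (θ i) ≤ cos θbar :=
    strictConcaveOn_cos_Icc.concaveOn.le_map_sum (fun _ _ => by positivity)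
      (by simp [N, hN.ne']) (fun i _ => ⟨by linarith [(hθ i).1, pi_pos], (hobtuse i).le⟩)
  have hθbar_ge : 2 * π / N ≤ θbar := by
    rw [hθbar, ← Finset.smul_sum, smul_eq_mul, div_eq_inv_mul]; gcongr
  have hθbar_le : θbar ≤ π := by
    rw [hθbar, ← Finset.smul_sum, smul_eq_mul, inv_mul_le_iff₀ hN]
    calc ∑ i, θ i ≤ ∑ _i : ι, π := Finset.sum_le_sum fun i _ => (hθ i).2
      _ = N * π := by simp [N]
  have hcos : cos θbar ≤ cos (2 * π / N) :=
    cos_le_cos_of_nonneg_of_le_pi (by positivity) hθbar_le hθbar_ge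
  rw [← Finset.smul_sum, smul_eq_mul, inv_mul_le_iff₀ hN] at hjensen
  calc min 1 (N * (1 - cos (2 * π / N))) ≤ N * (1 - cos (2 * π / N)) := min_le_right _ _
    _ ≤ N - ∑ i, cos (θ i) := by nlinarith
    _ = ∑ i, (1 - cos (θ i)) := by simp [Finset.sum_sub_distrib, N]

theorem Real.cos_two_pi_div_lt_one {n : ℕ} (hn : 2 ≤ n) : Real.cos (2 * π / n) < 1 := by
  have hpos : 0 < 2 * π / n := by positivity
  have hlt : 2 * π / n < 2 * π := div_lt_self (by positivity) (by exact_mod_cast hn)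
  exact (Real.cos_le_one _).lt_of_ne fun h =>
    hpos.ne' ((Real.cos_eq_one_iff_of_lt_of_lt (by linarith) hlt).mp h)

section Calculus

variable {F : Type*} [NormedAddCommGroup F] [InnerProductSpace ℝ F]

theorem HasDerivWithinAt.norm {f : ℝ → F} {f' : F} {s : Set ℝ} {x : ℝ}
    (hf : HasDerivWithinAt f f' s x) (h0 : f x ≠ 0) :
    HasDerivWithinAt (fun y => ‖f y‖) (⟪f x, f'⟫ / ‖f x‖) s x := by
  have h := hf.norm_sq.sqrt (by positivity)
  simp only [Real.sqrt_sq (norm_nonneg _)] at h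
  convert h using 1
  field_simp

theorem HasDerivWithinAt.norm_sub_of_pursuit {f g : ℝ → F} {u w : F} {s : Set ℝ} {x : ℝ}
    (hf : HasDerivWithinAt f u s x) (hg : HasDerivWithinAt g w s x) (hne : g x ≠ f x)
    (hu : u = ‖g x - f x‖⁻¹ • (g x - f x)) :
    HasDerivWithinAt (fun y => ‖g y - f y‖) (⟪u, w⟫ - 1) s x := by
  have hgf : g x - f x ≠ 0 := sub_ne_zero.mpr hne
  convert (hg.fun_sub hf).norm hgf using 1
  have hu1 : ⟪u, u⟫ = 1 := by
    rw [real_inner_self_eq_norm_sq, hu, norm_smul, norm_inv, norm_norm,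
      inv_mul_cancel₀ (norm_ne_zero_iff.mpr hgf), one_pow]
  rw [div_eq_inv_mul, ← real_inner_smul_left, ← hu, inner_sub_right, hu1]

theorem exists_mem_Icc_eq_zero_of_hasDerivWithinAt_le {f : ℝ → ℝ} {a b c : ℝ}
    (hab : a ≤ b) (hf : ContinuousOn f (Icc a b)) (ha : f a ≤ c * (b - a))
    (hnonneg : ∀ x ∈ Icc a b, 0 ≤ f x)
    (hderiv : ∀ x ∈ Ico a b, f x ≠ 0 → ∃ D, HasDerivWithinAt f D (Ici x) x ∧ D ≤ -c) :
    ∃ x ∈ Icc a b, f x = 0 := by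
  by_contra! hpos
  choose! D hD hDc using fun x hx => hderiv x hx (hpos x (Ico_subset_Icc_self hx))
  have hB : ∀ x, HasDerivAt (fun x => f a - c * (x - a)) (-c) x := fun x => by
    simpa using ((hasDerivAt_id x).sub_const a).const_mul c |>.const_sub (f a)
  have hb := right_mem_Icc.mpr hab
  have hfb : f b ≤ f a - c * (b - a) :=
    image_le_of_deriv_right_le_deriv_boundary hf hD (by simp) (by fun_prop)
      (fun x _ => (hB x).hasDerivWithinAt) hDc hb
  exact hpos b hb (le_antisymm (by linarith) (hnonneg b hb))

end Calculus

namespace CyclicPursuit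

variable {n : ℕ} {V : Type*} [NormedAddCommGroup V]

noncomputable def length [NeZero n] (b : ZMod n → ℝ → V) (t : ℝ) : ℝ :=
  ∑ i, ‖b (i + 1) t - b i t‖

noncomputable def velocity [InnerProductSpace ℝ V] (b : ZMod n → ℝ → V) (t : ℝ)
    (i : ZMod n) : V :=
  derivWithin (b i) (Ici t) t

variable [NeZero n] {b : ZMod n → ℝ → V}

theorem length_nonneg (t : ℝ) : 0 ≤ length b t :=
  Finset.sum_nonneg fun _ _ => norm_nonneg _

theorem length_eq_zero_iff {t : ℝ} : length b t = 0 ↔ ∀ i, b i t = b (i + 1) t := by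
  rw [length, Finset.sum_eq_zero_iff_of_nonneg fun _ _ => norm_nonneg _]
  simp only [Finset.mem_univ, forall_const, norm_eq_zero, sub_eq_zero]
  exact forall_congr' fun _ => eq_comm

end CyclicPursuit

namespace IsEuclideanCyclicPursuit

open CyclicPursuit InnerProductGeometry

variable {n d : ℕ} {b : ZMod n → ℝ → EuclideanSpace ℝ (Fin d)} {i : ZMod n} {t : ℝ}

theorem eqOn_Ici_of_eq (hb : IsEuclideanCyclicPursuit n d b) (ht : 0 ≤ t)
    (h : b i t = b (i + 1) t) : EqOn (b i) (b (i + 1)) (Ici t) := fun s hs =>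
  (eq_or_lt_of_le hs).elim (by rintro rfl; exact h) (hb.merge i t ht h s)

theorem eq_of_halted (hb : IsEuclideanCyclicPursuit n d b) {t₀ s : ℝ} (ht₀ : 0 ≤ t₀)
    (h : ∀ i, b i t₀ = b 0 t₀) (hs : t₀ ≤ s) (i : ZMod n) : b i s = b 0 t₀ :=
  (eq_or_lt_of_le hs).elim (by rintro rfl; exact h i) (fun hts => hb.halt t₀ ht₀ h s hts i)

theorem continuousOn_length [NeZero n] (hb : IsEuclideanCyclicPursuit n d b) :
    ContinuousOn (length b) (Ici 0) :=
  continuousOn_finsetSum _ fun i _ => ((hb.cont (i + 1)).sub (hb.cont i)).norm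

theorem velocity_eq_of_ne (hb : IsEuclideanCyclicPursuit n d b) (ht : 0 ≤ t)
    (h : b i t ≠ b (i + 1) t) :
    velocity b t i = ‖b (i + 1) t - b i t‖⁻¹ • (b (i + 1) t - b i t) :=
  (hb.chase i t ht h).derivWithin (uniqueDiffWithinAt_Ici t)

theorem velocity_eq_of_eq (hb : IsEuclideanCyclicPursuit n d b) (ht : 0 ≤ t)
    (h : b i t = b (i + 1) t) : velocity b t i = velocity b t (i + 1) :=
  derivWithin_congr (hb.eqOn_Ici_of_eq ht h) h

theorem hasDerivWithinAt_velocity [NeZero n] (hb : IsEuclideanCyclicPursuit n d b) (ht : 0 ≤ t)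
    (hgap : ∃ j, b j t ≠ b (j + 1) t) (i : ZMod n) :
    HasDerivWithinAt (b i) (velocity b t i) (Ici t) t ∧ ‖velocity b t i‖ = 1 := by
  -- a bug that has caught up moves with the bug ahead, so go backwards from a nonzero gap
  obtain ⟨j, hj⟩ := hgap
  have of_ne (i) (h : b i t ≠ b (i + 1) t) :
      HasDerivWithinAt (b i) (velocity b t i) (Ici t) t ∧ ‖velocity b t i‖ = 1 := by
    rw [hb.velocity_eq_of_ne ht h]
    exact ⟨hb.chase i t ht h, norm_smul_inv_norm (sub_ne_zero.mpr h.symm)⟩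
  refine ZMod.decreasing_induction j (of_ne j hj) (fun i hnext => ?_) i
  by_cases h : b i t = b (i + 1) t
  · rw [hb.velocity_eq_of_eq ht h]
    exact ⟨hnext.1.congr_of_mem (hb.eqOn_Ici_of_eq ht h) self_mem_Ici, hnext.2⟩
  · exact of_ne i h

theorem hasDerivWithinAt_gap [NeZero n] (hb : IsEuclideanCyclicPursuit n d b) (ht : 0 ≤ t)
    (hgap : ∃ j, b j t ≠ b (j + 1) t) (i : ZMod n) :
    HasDerivWithinAt (fun s => ‖b (i + 1) s - b i s‖)
      (⟪velocity b t i, velocity b t (i + 1)⟫ - 1) (Ici t) t := by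
  have hv := hb.hasDerivWithinAt_velocity ht hgap
  by_cases h : b i t = b (i + 1) t
  · have hzero : ⟪velocity b t i, velocity b t (i + 1)⟫ - 1 = 0 := by
      rw [← hb.velocity_eq_of_eq ht h, real_inner_self_eq_norm_sq, (hv i).2]; norm_num
    rw [hzero]
    refine (hasDerivWithinAt_const t (Ici t) (0 : ℝ)).congr_of_mem (fun s hs => ?_) self_mem_Ici
    simp [hb.eqOn_Ici_of_eq ht h hs]
  · exact (hv i).1.norm_sub_of_pursuit (hv (i + 1)).1 (Ne.symm h) (hb.velocity_eq_of_ne ht h)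

theorem exists_hasDerivWithinAt_length_le [NeZero n] (hb : IsEuclideanCyclicPursuit n d b)
    (ht : 0 ≤ t) (hgap : ∃ j, b j t ≠ b (j + 1) t) :
    ∃ D, HasDerivWithinAt (length b) D (Ici t) t ∧
      D ≤ -min 1 ((n : ℝ) * (1 - Real.cos (2 * π / n))) := by
  set v := velocity b t
  have hv := hb.hasDerivWithinAt_velocity ht hgap
  have hturning : 2 * π ≤ ∑ i, angle (v i) (v (i + 1)) := by
    refine two_pi_le_sum_angle (fun i => b (i + 1) t - b i t) v ?_ ?_
      (fun i h => hb.velocity_eq_of_ne ht (Ne.symm (sub_ne_zero.mp h)))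
    · rw [Finset.sum_sub_distrib, sub_eq_zero]
      exact Fintype.sum_equiv (Equiv.addRight 1) _ _ fun _ => rfl
    · obtain ⟨j, hj⟩ := hgap
      exact ⟨j, sub_ne_zero.mpr (Ne.symm hj)⟩
  have hcos : ∀ i, Real.cos (angle (v i) (v (i + 1))) = ⟪v i, v (i + 1)⟫ := fun i => by
    rw [cos_angle, (hv i).2, (hv (i + 1)).2, mul_one, div_one]
  have hbound :=
    min_le_sum_one_sub_cos _ (fun i => ⟨angle_nonneg _ _, angle_le_pi _ _⟩) hturning
  simp only [ZMod.card, hcos] at hbound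
  refine ⟨∑ i, (⟪v i, v (i + 1)⟫ - 1),
    HasDerivWithinAt.fun_sum fun i _ => hb.hasDerivWithinAt_gap ht hgap i, ?_⟩
  simp only [Finset.sum_sub_distrib] at hbound ⊢
  linarith

end IsEuclideanCyclicPursuit

/-- For cyclic pursuit of `n` bugs in `ℝ^d`, at any time `t` at which not
all bugs coincide, the total length `l t = ∑_{i ∈ ℤ/n} ‖b (i+1) t - b i t‖` satisfies
`|l'(t)| ≥ min 1 (n (1 - cos (2π/n)))`.  Consequently, the pursuit ends by time
`l 0 · (min 1 (n (1 - cos (2π/n))))⁻¹` (a bound that grows linearly in `n`):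
for all `t` past that time, all bugs sit at the point `b 0 T`, `T` being that time. -/
theorem euclidean_cyclic_pursuit_length_decrease_rate
    (n d : ℕ) [NeZero n] (hn : 2 ≤ n)
    (b : ZMod n → ℝ → EuclideanSpace ℝ (Fin d))
    (hb : IsEuclideanCyclicPursuit n d b) :
    (∀ t : ℝ, 0 ≤ t → ¬ (∀ i, b i t = b 0 t) →
      ∀ l' : ℝ,
        HasDerivWithinAt (fun u => ∑ i : ZMod n, ‖b (i + 1) u - b i u‖) l' (Ici t) t →
        min 1 ((n : ℝ) * (1 - Real.cos (2 * π / n))) ≤ |l'|) ∧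
    (∀ t : ℝ,
      (∑ i : ZMod n, ‖b (i + 1) 0 - b i 0‖) *
          (min 1 ((n : ℝ) * (1 - Real.cos (2 * π / n))))⁻¹ ≤ t →
      ∀ i, b i t =
        b 0 ((∑ i : ZMod n, ‖b (i + 1) 0 - b i 0‖) *
          (min 1 ((n : ℝ) * (1 - Real.cos (2 * π / n))))⁻¹)) := by
  set c := min 1 ((n : ℝ) * (1 - Real.cos (2 * π / n)))
  have hc : 0 < c := lt_min one_pos (mul_pos (by positivity)
    (sub_pos.mpr (Real.cos_two_pi_div_lt_one hn)))
  have hgap : ∀ t, ¬ (∀ i, b i t = b 0 t) → ∃ j, b j t ≠ b (j + 1) t := fun t hne => by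
    by_contra! h
    exact hne (ZMod.apply_eq_apply_zero h)
  refine ⟨fun t ht hne l' hl' => ?_, fun t hTt i => ?_⟩
  · obtain ⟨D, hD, hDc⟩ := hb.exists_hasDerivWithinAt_length_le ht (hgap t hne)
    rw [(uniqueDiffWithinAt_Ici t).eq_deriv _ hl' hD]
    linarith [neg_le_abs D]
  · set T := CyclicPursuit.length b 0 * c⁻¹
    have hT : 0 ≤ T := mul_nonneg (CyclicPursuit.length_nonneg 0) (inv_nonneg.mpr hc.le)
    have hcT : c * T = CyclicPursuit.length b 0 := by simp only [T]; field_simp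
    obtain ⟨t₀, ⟨ht₀, ht₀T⟩, hstop⟩ := exists_mem_Icc_eq_zero_of_hasDerivWithinAt_le hT
      (hb.continuousOn_length.mono Icc_subset_Ici_self) (by rw [sub_zero, hcT])
      (fun x _ => CyclicPursuit.length_nonneg x)
      (fun x hx hne => hb.exists_hasDerivWithinAt_length_le hx.1 (by
        simpa using mt CyclicPursuit.length_eq_zero_iff.mpr hne))
    have hall := ZMod.apply_eq_apply_zero (CyclicPursuit.length_eq_zero_iff.mp hstop)
    exact (hb.eq_of_halted ht₀ hall (ht₀T.trans hTt) i).trans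
      (hb.eq_of_halted ht₀ hall ht₀T 0).symm
end

section
/- For cyclic pursuit of n bugs in the plane ℝ² whose initial positions b_i(0) are the vertices, in cyclic order, of a regular planar n-gon, the time from the start of pursuit until all bugs coincide is exactly l(0)·(n(1 − cos(2π/n)))^{-1}, where l(0) is the perimeter of the n-gon. -/
open Set Filter
open scoped Topology Real

section Uniqueness

variable {E : Type*} [NormedAddCommGroup E] [NormedSpace ℝ E] {v : E → E} {U : Set E}
  {f g : ℝ → E} {a b : ℝ}

theorem eventuallyEq_nhdsGT_of_hasDerivWithinAt_of_locallyLipschitzOn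
    (hU : IsOpen U) (hv : LocallyLipschitzOn U v)
    (hf : ContinuousOn f (Icc a b))
    (hf' : ∀ t ∈ Ico a b, f t ∈ U → HasDerivWithinAt f (v (f t)) (Ici t) t)
    (hg : ContinuousOn g (Icc a b))
    (hg' : ∀ t ∈ Ico a b, HasDerivWithinAt g (v (g t)) (Ici t) t)
    (hgU : ∀ t ∈ Ico a b, g t ∈ U) {x : ℝ} (hx : x ∈ Ico a b) (hfg : f x = g x) :
    f =ᶠ[𝓝[>] x] g := by
  obtain ⟨K, V, hV, hvV⟩ := hv (hgU x hx)
  rw [hU.nhdsWithin_eq (hgU x hx)] at hV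
  have hIcc : Icc a b ∈ 𝓝[≥] x :=
    mem_of_superset (Icc_mem_nhdsGE hx.2) (Icc_subset_Icc_left hx.1)
  have hIco : Ico a b ∈ 𝓝[≥] x :=
    mem_of_superset (Ico_mem_nhdsGE hx.2) (Ico_subset_Ico_left hx.1)
  have hnear : ∀ᶠ t in 𝓝[≥] x, t ∈ Ico a b ∧ f t ∈ V ∩ U ∧ g t ∈ V ∩ U := by
    have hW : V ∩ U ∈ 𝓝 (g x) := inter_mem hV (hU.mem_nhds (hgU x hx))
    refine (eventually_mem_set.2 hIco).and (Eventually.and ?_ ?_)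
    · exact ((hf x (Ico_subset_Icc_self hx)).mono_of_mem_nhdsWithin hIcc).tendsto
        (hfg ▸ hW)
    · exact ((hg x (Ico_subset_Icc_self hx)).mono_of_mem_nhdsWithin hIcc).tendsto hW
  obtain ⟨u, hxu, hu⟩ := mem_nhdsGE_iff_exists_Ico_subset.1 hnear
  have hsub : Icc x ((x + u) / 2) ⊆ Icc a b := fun t ht =>
    Ico_subset_Icc_self (hu ⟨ht.1, by linarith [ht.2, mem_Ioi.1 hxu]⟩).1
  have hu' : ∀ t ∈ Ico x ((x + u) / 2), t ∈ Ico a b ∧ f t ∈ V ∩ U ∧ g t ∈ V ∩ U := fun t ht =>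
    hu (Ico_subset_Ico_right (by linarith [mem_Ioi.1 hxu]) ht)
  have heq := ODE_solution_unique_of_mem_Icc_right (v := fun _ => v) (s := fun _ => V ∩ U)
    (fun _ _ => hvV.mono inter_subset_left) (hf.mono hsub)
    (fun t ht => hf' t (hu' t ht).1 (hu' t ht).2.1.2) (fun t ht => (hu' t ht).2.1)
    (hg.mono hsub) (fun t ht => hg' t (hu' t ht).1) (fun t ht => (hu' t ht).2.2) hfg
  exact mem_of_superset (Ioo_mem_nhdsGT (by linarith [mem_Ioi.1 hxu])) fun t ht =>
    heq (Ioo_subset_Icc_self ht)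

-- `f` need only obey the ODE inside `U` (as a pursuit does only while neighbours are apart):
-- by continuity it stays in `U` near any time at which it meets `g`.
theorem eqOn_Icc_of_hasDerivWithinAt_of_locallyLipschitzOn
    (hU : IsOpen U) (hv : LocallyLipschitzOn U v)
    (hf : ContinuousOn f (Icc a b))
    (hf' : ∀ t ∈ Ico a b, f t ∈ U → HasDerivWithinAt f (v (f t)) (Ici t) t)
    (hg : ContinuousOn g (Icc a b))
    (hg' : ∀ t ∈ Ico a b, HasDerivWithinAt g (v (g t)) (Ici t) t)
    (hgU : ∀ t ∈ Ico a b, g t ∈ U) (ha : f a = g a) :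
    EqOn f g (Icc a b) := by
  have hclosed : IsClosed ({t | f t = g t} ∩ Icc a b) := by
    rw [inter_comm]
    convert (hf.sub hg).preimage_isClosed_of_isClosed isClosed_Icc (isClosed_singleton (x := 0))
      using 2
    simp [Set.ext_iff, sub_eq_zero]
  exact hclosed.Icc_subset_of_forall_mem_nhdsWithin ha fun x hx =>
    eventuallyEq_nhdsGT_of_hasDerivWithinAt_of_locallyLipschitzOn hU hv hf hf' hg hg' hgU hx.2 hx.1

end Uniqueness

namespace CyclicPursuit

variable {n : ℕ}

noncomputable def field {E : Type*} [NormedAddCommGroup E] [NormedSpace ℝ E] (x : ZMod n → E) :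
    ZMod n → E :=
  fun i => ‖x (i + 1) - x i‖⁻¹ • (x (i + 1) - x i)

def Separated {X : Type*} (x : ZMod n → X) : Prop := ∀ i, x i ≠ x (i + 1)

theorem isOpen_setOf_separated [NeZero n] {X : Type*} [TopologicalSpace X] [T2Space X] :
    IsOpen {x : ZMod n → X | Separated x} := by
  simp only [Separated, ofPred_forall]
  exact isOpen_iInter_of_finite fun i => isOpen_ne_fun (continuous_apply i) (continuous_apply _)

variable [NeZero n] {E : Type*} [NormedAddCommGroup E] [InnerProductSpace ℝ E]

theorem contDiffAt_field {k : WithTop ℕ∞} {x : ZMod n → E} (hx : Separated x) :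
    ContDiffAt ℝ k field x := by
  refine contDiffAt_pi.2 fun i => ?_
  have hdiff : ContDiffAt ℝ k (fun y : ZMod n → E => y (i + 1) - y i) x :=
    (contDiffAt_apply ℝ _ _ _).sub (contDiffAt_apply ℝ _ _ _)
  have hne : x (i + 1) - x i ≠ 0 := sub_ne_zero.2 (hx i).symm
  exact ((hdiff.norm ℝ hne).inv (norm_ne_zero_iff.2 hne)).smul hdiff

theorem locallyLipschitzOn_field : LocallyLipschitzOn {x : ZMod n → E | Separated x} field :=
  fun x hx => by
    obtain ⟨K, V, hV, hK⟩ := (contDiffAt_field (k := 1) hx).exists_lipschitzOnWith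
    exact ⟨K, V, mem_nhdsWithin_of_mem_nhds hV, hK⟩

end CyclicPursuit

open CyclicPursuit

theorem IsEuclideanCyclicPursuit.hasDerivWithinAt_field {n d : ℕ}
    {b : ZMod n → ℝ → EuclideanSpace ℝ (Fin d)} (hb : IsEuclideanCyclicPursuit n d b) {t : ℝ}
    (ht : 0 ≤ t) (hsep : Separated fun i => b i t) :
    HasDerivWithinAt (fun s i => b i s) (field fun i => b i t) (Ici t) t :=
  hasDerivWithinAt_pi.2 fun i => hb.chase i t ht (hsep i)

local notation "ℝ²" => EuclideanSpace ℝ (Fin 2)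

namespace Plane

noncomputable def polarUnit (θ : ℝ) : ℝ² :=
  Real.cos θ • EuclideanSpace.single 0 1 + Real.sin θ • EuclideanSpace.single 1 1

theorem polarUnit_add (θ α : ℝ) :
    polarUnit (θ + α) = Real.cos α • polarUnit θ + Real.sin α • polarUnit (θ + π / 2) := by
  ext j
  fin_cases j <;> simp [polarUnit, Real.cos_add, Real.sin_add] <;> ring

theorem norm_polarUnit (θ : ℝ) : ‖polarUnit θ‖ = 1 := by
  simp [polarUnit, EuclideanSpace.norm_eq, Fin.sum_univ_two]

theorem polarUnit_add_nat_mul_two_pi (θ : ℝ) (k : ℕ) :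
    polarUnit (θ + k * (2 * π)) = polarUnit θ := by
  simp only [polarUnit, Real.cos_add_nat_mul_two_pi, Real.sin_add_nat_mul_two_pi]

theorem polarUnit_add_two_mul_sub (θ α : ℝ) :
    polarUnit (θ + 2 * α) - polarUnit θ = (2 * Real.sin α) • polarUnit (θ + α + π / 2) := by
  have h₁ := polarUnit_add (θ + α) α
  have h₂ := polarUnit_add (θ + α) (-α)
  rw [add_assoc, ← two_mul] at h₁
  rw [add_neg_cancel_right, Real.cos_neg, Real.sin_neg] at h₂
  rw [h₁, h₂, two_mul, add_smul, neg_smul]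
  abel

theorem _root_.HasDerivAt.polarUnit {f : ℝ → ℝ} {f' t : ℝ} (hf : HasDerivAt f f' t) :
    HasDerivAt (fun s => polarUnit (f s)) (f' • polarUnit (f t + π / 2)) t := by
  refine ((hf.cos.smul_const _).add (hf.sin.smul_const _)).congr_deriv ?_
  rw [Plane.polarUnit, Real.cos_add_pi_div_two, Real.sin_add_pi_div_two, smul_add, smul_smul,
    smul_smul, mul_comm f', mul_comm f']

theorem polarUnit_add_pi (θ : ℝ) : polarUnit (θ + π) = -polarUnit θ := by
  simp only [polarUnit, Real.cos_add_pi, Real.sin_add_pi, neg_smul, neg_add]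

theorem polarUnit_add_add_pi_div_two (θ α : ℝ) :
    polarUnit (θ + α + π / 2)
      = Real.cos α • polarUnit (θ + π / 2) - Real.sin α • polarUnit θ := by
  rw [add_right_comm, polarUnit_add, add_assoc θ, add_halves, polarUnit_add_pi, smul_neg,
    sub_eq_add_neg]

end Plane

theorem Real.sin_pi_div_pos {n : ℕ} (hn : 2 ≤ n) : 0 < Real.sin (π / n) := by
  have hn' : (2 : ℝ) ≤ n := by exact_mod_cast hn
  apply Real.sin_pos_of_pos_of_lt_pi (by positivity)
  rw [div_lt_iff₀ (by positivity)]
  nlinarith [Real.pi_pos]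

namespace CyclicPursuit

open Plane

noncomputable def spiralRadius (α R t : ℝ) : ℝ := R - Real.sin α * t

noncomputable def spiralAngle (α R t : ℝ) : ℝ :=
  Real.cot α * (Real.log R - Real.log (spiralRadius α R t))

noncomputable def spiralBug (c : ℝ²) (α R θ t : ℝ) : ℝ² :=
  c + spiralRadius α R t • polarUnit (θ + spiralAngle α R t)

variable {c : ℝ²} {α R θ t : ℝ}

theorem spiralBug_zero : spiralBug c α R θ 0 = c + R • polarUnit θ := by
  simp [spiralBug, spiralAngle, spiralRadius]

theorem spiralBug_add_nat_mul_two_pi (k : ℕ) :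
    spiralBug c α R (θ + k * (2 * π)) t = spiralBug c α R θ t := by
  rw [spiralBug, add_right_comm, polarUnit_add_nat_mul_two_pi, spiralBug]

theorem norm_spiralBug_sub_center : ‖spiralBug c α R θ t - c‖ = |spiralRadius α R t| := by
  rw [spiralBug, add_sub_cancel_left, norm_smul, norm_polarUnit, mul_one, Real.norm_eq_abs]

theorem spiralBug_add_two_mul_sub :
    spiralBug c α R (θ + 2 * α) t - spiralBug c α R θ t
      = (2 * spiralRadius α R t * Real.sin α) • polarUnit (θ + spiralAngle α R t + α + π / 2) := by
  rw [spiralBug, spiralBug, add_sub_add_left_eq_sub, ← smul_sub, add_right_comm,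
    polarUnit_add_two_mul_sub, smul_smul]
  ring_nf

theorem hasDerivAt_spiralRadius : HasDerivAt (spiralRadius α R) (-Real.sin α) t :=
  (((hasDerivAt_id' t).const_mul (Real.sin α)).const_sub R).congr_deriv (by ring)

theorem hasDerivAt_spiralAngle (hα : Real.sin α ≠ 0) (hr : spiralRadius α R t ≠ 0) :
    HasDerivAt (spiralAngle α R) (Real.cos α / spiralRadius α R t) t := by
  refine ((hasDerivAt_spiralRadius.log hr).const_sub _ |>.const_mul _).congr_deriv ?_
  rw [Real.cot_eq_cos_div_sin]
  field_simp

theorem hasDerivAt_spiralBug (hα : Real.sin α ≠ 0) (hr : spiralRadius α R t ≠ 0) :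
    HasDerivAt (spiralBug c α R θ) (polarUnit (θ + spiralAngle α R t + α + π / 2)) t := by
  have hθ := ((hasDerivAt_spiralAngle hα hr).const_add θ).polarUnit
  refine ((hasDerivAt_spiralRadius.smul hθ).const_add c).congr_deriv ?_
  rw [polarUnit_add_add_pi_div_two (θ + spiralAngle α R t), smul_smul, mul_div_cancel₀ _ hr,
    neg_smul]
  abel

theorem continuous_spiralRadius : Continuous (spiralRadius α R) :=
  continuous_const.sub (continuous_const.mul continuous_id)

theorem spiralRadius_pos (hα : 0 < Real.sin α) (ht : t < R / Real.sin α) :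
    0 < spiralRadius α R t := by
  rw [lt_div_iff₀ hα] at ht
  simp only [spiralRadius]
  linarith

noncomputable def ngonSpiral (c : ℝ²) (n : ℕ) (R φ t : ℝ) : ZMod n → ℝ² :=
  fun i => spiralBug c (π / n) R (2 * π * i.val / n + φ) t

variable {n : ℕ} [NeZero n] {φ : ℝ}

-- `(i + 1).val` wraps around to `0` at `i = n - 1`; the two angles differ by a multiple of `2π`.
theorem ngonSpiral_succ (i : ZMod n) :
    ngonSpiral c n R φ t (i + 1)
      = spiralBug c (π / n) R (2 * π * i.val / n + φ + 2 * (π / n)) t := by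
  have hn : (n : ℝ) ≠ 0 := Nat.cast_ne_zero.2 (NeZero.ne n)
  have hdiv := Nat.mod_add_div (i.val + 1) n
  rw [← Nat.add_mod_mod, ← ZMod.val_one_eq_one_mod, ← ZMod.val_add] at hdiv
  have hangle : 2 * π * i.val / n + φ + 2 * (π / n)
      = 2 * π * (i + 1).val / n + φ + ((i.val + 1) / n : ℕ) * (2 * π) := by
    have hreal : ((i.val : ℕ) : ℝ) + 1 = (i + 1).val + n * ((i.val + 1) / n : ℕ) := by
      exact_mod_cast hdiv.symm
    field_simp
    linear_combination 2 * π * hreal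
  rw [hangle, spiralBug_add_nat_mul_two_pi, ngonSpiral]

theorem ngonSpiral_succ_sub (i : ZMod n) :
    ngonSpiral c n R φ t (i + 1) - ngonSpiral c n R φ t i
      = (2 * spiralRadius (π / n) R t * Real.sin (π / n))
        • polarUnit (2 * π * i.val / n + φ + spiralAngle (π / n) R t + π / n + π / 2) := by
  rw [ngonSpiral_succ, ngonSpiral, spiralBug_add_two_mul_sub]

theorem norm_ngonSpiral_succ_sub (hn : 2 ≤ n) (hr : 0 < spiralRadius (π / n) R t)
    (i : ZMod n) :
    ‖ngonSpiral c n R φ t (i + 1) - ngonSpiral c n R φ t i‖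
      = 2 * spiralRadius (π / n) R t * Real.sin (π / n) := by
  have := Real.sin_pi_div_pos hn
  rw [ngonSpiral_succ_sub, norm_smul, norm_polarUnit, mul_one,
    Real.norm_of_nonneg (by positivity)]

theorem separated_ngonSpiral (hn : 2 ≤ n) (hr : 0 < spiralRadius (π / n) R t) :
    Separated (ngonSpiral c n R φ t) := fun i h => by
  have := norm_ngonSpiral_succ_sub (c := c) (φ := φ) hn hr i
  rw [h, sub_self, norm_zero] at this
  nlinarith [Real.sin_pi_div_pos hn]

theorem hasDerivAt_ngonSpiral (hn : 2 ≤ n) (hr : 0 < spiralRadius (π / n) R t) :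
    HasDerivAt (ngonSpiral c n R φ) (field (ngonSpiral c n R φ t)) t := by
  refine hasDerivAt_pi.2 fun i => ?_
  have hs := Real.sin_pi_div_pos hn
  have hd := hasDerivAt_spiralBug (c := c) (θ := 2 * π * i.val / n + φ) hs.ne' hr.ne'
  rwa [field, norm_ngonSpiral_succ_sub hn hr, ngonSpiral_succ_sub, smul_smul,
    inv_mul_cancel₀ (by positivity), one_smul]

end CyclicPursuit

open Plane

section Capture

variable {n : ℕ} [NeZero n] {b : ZMod n → ℝ → ℝ²} {c : ℝ²} {R φ : ℝ}

theorem IsEuclideanCyclicPursuit.eq_ngonSpiral (hb : IsEuclideanCyclicPursuit n 2 b)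
    (hn : 2 ≤ n) (h0 : ∀ i, b i 0 = ngonSpiral c n R φ 0 i) {t : ℝ} (ht : 0 ≤ t)
    (htT : t < R / Real.sin (π / n)) (i : ZMod n) : b i t = ngonSpiral c n R φ t i := by
  have hr : ∀ s ∈ Icc 0 t, 0 < spiralRadius (π / n) R s := fun s hs =>
    spiralRadius_pos (Real.sin_pi_div_pos hn) (hs.2.trans_lt htT)
  have hspiral : ∀ s ∈ Icc 0 t,
      HasDerivAt (ngonSpiral c n R φ) (field (ngonSpiral c n R φ s)) s :=
    fun s hs => hasDerivAt_ngonSpiral hn (hr s hs)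
  refine congrFun (eqOn_Icc_of_hasDerivWithinAt_of_locallyLipschitzOn isOpen_setOf_separated
    locallyLipschitzOn_field (f := fun s i => b i s) ?_ ?_ ?_ ?_ ?_ (funext h0) ⟨ht, le_rfl⟩) i
  · exact continuousOn_pi.2 fun i => (hb.cont i).mono Icc_subset_Ici_self
  · exact fun s hs hsep => hb.hasDerivWithinAt_field hs.1 hsep
  · exact fun s hs => (hspiral s hs).continuousAt.continuousWithinAt
  · exact fun s hs => (hspiral s (Ico_subset_Icc_self hs)).hasDerivWithinAt
  · exact fun s hs => separated_ngonSpiral hn (hr s (Ico_subset_Icc_self hs))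

theorem IsEuclideanCyclicPursuit.eq_center_of_ngonSpiral (hb : IsEuclideanCyclicPursuit n 2 b)
    (hn : 2 ≤ n) (hR : 0 < R) (h0 : ∀ i, b i 0 = ngonSpiral c n R φ 0 i) (i : ZMod n) :
    b i (R / Real.sin (π / n)) = c := by
  have hs := Real.sin_pi_div_pos hn
  set T := R / Real.sin (π / n)
  have hT : 0 < T := by positivity
  have hdist : EqOn (fun t => ‖b i t - c‖) (fun t => |spiralRadius (π / n) R t|) (Icc 0 T) := by
    refine EqOn.of_subset_closure (s := Ico 0 T) (fun t ht => ?_) ?_ ?_ Ico_subset_Icc_self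
      (closure_Ico hT.ne).ge
    · rw [hb.eq_ngonSpiral hn h0 ht.1 ht.2, ngonSpiral, norm_spiralBug_sub_center]
    · exact (((hb.cont i).mono Icc_subset_Ici_self).sub continuousOn_const).norm
    · exact continuous_spiralRadius.abs.continuousOn
  have hTr : spiralRadius (π / n) R T = 0 := by
    simp only [spiralRadius, T]
    field_simp
    ring
  simpa [hTr, sub_eq_zero] using hdist ⟨hT.le, le_rfl⟩

end Capture

/-- For cyclic pursuit of `n` bugs in the plane `ℝ²` whose initial
positions are the vertices, in cyclic order, of a regular planar `n`-gon (with center `c`,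
circumradius `R > 0` and phase `φ`), the time from the start of pursuit until all bugs
coincide is exactly `T = l(0) · (n (1 - cos (2π/n)))⁻¹`, where `l(0)` is the perimeter:
all bugs coincide at time `T`, and at no earlier time `t ∈ [0, T)` do they all coincide. -/
theorem regular_ngon_pursuit_capture_time
    (n : ℕ) [NeZero n] (hn : 2 ≤ n)
    (b : ZMod n → ℝ → EuclideanSpace ℝ (Fin 2))
    (hb : IsEuclideanCyclicPursuit n 2 b)
    (c : EuclideanSpace ℝ (Fin 2)) (R φ : ℝ) (hR : 0 < R)
    (hinit : ∀ i : ZMod n, b i 0 = c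
        + (R * Real.cos (2 * π * (i.val : ℝ) / n + φ)) • EuclideanSpace.single (0 : Fin 2) (1 : ℝ)
        + (R * Real.sin (2 * π * (i.val : ℝ) / n + φ)) • EuclideanSpace.single (1 : Fin 2) (1 : ℝ)) :
    (∀ i, b i ((∑ i : ZMod n, ‖b (i + 1) 0 - b i 0‖) * ((n : ℝ) * (1 - Real.cos (2 * π / n)))⁻¹)
        = b 0 ((∑ i : ZMod n, ‖b (i + 1) 0 - b i 0‖) * ((n : ℝ) * (1 - Real.cos (2 * π / n)))⁻¹)) ∧
    (∀ t : ℝ, 0 ≤ t →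
      t < (∑ i : ZMod n, ‖b (i + 1) 0 - b i 0‖) * ((n : ℝ) * (1 - Real.cos (2 * π / n)))⁻¹ →
      ¬ ∀ i, b i t = b 0 t) := by
  have hs := Real.sin_pi_div_pos hn
  have h0 : ∀ i, b i 0 = ngonSpiral c n R φ 0 i := fun i => by
    rw [hinit, ngonSpiral, spiralBug_zero, polarUnit, smul_add, smul_smul, smul_smul, add_assoc]
  have hT : (∑ i : ZMod n, ‖b (i + 1) 0 - b i 0‖) * ((n : ℝ) * (1 - Real.cos (2 * π / n)))⁻¹
      = R / Real.sin (π / n) := by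
    have hr0 : spiralRadius (π / n) R 0 = R := by simp [spiralRadius]
    simp only [h0, norm_ngonSpiral_succ_sub hn (hr0 ▸ hR), hr0, Finset.sum_const,
      Finset.card_univ, ZMod.card, nsmul_eq_mul]
    have hcos : 1 - Real.cos (2 * π / n) = 2 * Real.sin (π / n) ^ 2 := by
      rw [mul_div_assoc, Real.cos_two_mul, Real.cos_sq']
      ring
    rw [hcos]
    field_simp
  rw [hT]
  refine ⟨fun i => by rw [hb.eq_center_of_ngonSpiral hn hR h0, hb.eq_center_of_ngonSpiral hn hR h0],
    fun t ht htT hall => ?_⟩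
  refine separated_ngonSpiral (c := c) (φ := φ) hn (spiralRadius_pos hs htT) 0 ?_
  rw [← hb.eq_ngonSpiral hn h0 ht htT, ← hb.eq_ngonSpiral hn h0 ht htT, zero_add, hall 1]
end
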